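/- Let R be a cartesian and modular relational doctrine. Then for every relation α ∈ R(X,Y) the equation (α ⊠ d_Y) ; gr(Δ_Y)° ; gr(!_Y) = (d_X ⊠ α°) ; gr(Δ_X)° ; gr(!_X) holds in R(X×Y, 1). -/

import Mathlib

open CategoryTheory

universe w w' v v' u u'

/-- A relational doctrine on a category `C` with fibres `P X Y` (posets):
a contravariant functor `(C^op × C^op) → Pos` with identities, composition and converse. -/
structure RelDoctrine (C : Type u) [Category.{v} C] (P : C → C → Type w)
    [∀ X Y : C, PartialOrder (P X Y)] where
  reidx : ∀ {A X B Y : C}, (A ⟶ X) → (B ⟶ Y) → P X Y → P A B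
  reidx_mono : ∀ {A X B Y : C} (f : A ⟶ X) (g : B ⟶ Y), Monotone (reidx f g)
  reidx_id : ∀ {X Y : C} (α : P X Y), reidx (𝟙 X) (𝟙 Y) α = α
  reidx_comp :
    ∀ {A X X' B Y Y' : C} (f : A ⟶ X) (f' : X ⟶ X') (g : B ⟶ Y) (g' : Y ⟶ Y') (α : P X' Y'),
      reidx (f ≫ f') (g ≫ g') α = reidx f g (reidx f' g' α)
  d : ∀ X : C, P X X
  comp : ∀ {X Y Z : C}, P X Y → P Y Z → P X Z
  comp_mono : ∀ {X Y Z : C} {α α' : P X Y} {β β' : P Y Z},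
      α ≤ α' → β ≤ β' → comp α β ≤ comp α' β'
  conv : ∀ {X Y : C}, P X Y → P Y X
  conv_mono : ∀ {X Y : C} {α α' : P X Y}, α ≤ α' → conv α ≤ conv α'
  d_le_reidx : ∀ {X Y : C} (f : X ⟶ Y), d X ≤ reidx f f (d Y)
  comp_reidx_le : ∀ {X A Y B Z W : C} (f : X ⟶ A) (g : Y ⟶ B) (h : Z ⟶ W)
      (α : P A B) (β : P B W),
      comp (reidx f g α) (reidx g h β) ≤ reidx f h (comp α β)
  conv_reidx_le : ∀ {X A Y B : C} (f : X ⟶ A) (g : Y ⟶ B) (α : P A B),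
      conv (reidx f g α) ≤ reidx g f (conv α)
  comp_assoc : ∀ {X Y Z W : C} (α : P X Y) (β : P Y Z) (γ : P Z W),
      comp α (comp β γ) = comp (comp α β) γ
  d_comp : ∀ {X Y : C} (α : P X Y), comp (d X) α = α
  comp_d : ∀ {X Y : C} (α : P X Y), comp α (d Y) = α
  conv_comp : ∀ {X Y Z : C} (α : P X Y) (β : P Y Z),
      conv (comp α β) = comp (conv β) (conv α)
  conv_d : ∀ X : C, conv (d X) = d X
  conv_conv : ∀ {X Y : C} (α : P X Y), conv (conv α) = α

namespace RelDoctrine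

variable {C : Type u} [Category.{v} C] {P : C → C → Type w} [∀ X Y : C, PartialOrder (P X Y)]

/-- The graph of an arrow `f : X ⟶ Y` is `R(f, id_Y)(d_Y)`. -/
def gr (D : RelDoctrine C P) {X Y : C} (f : X ⟶ Y) : P X Y :=
  D.reidx f (𝟙 Y) (D.d Y)

/-- `α` is functional: `α° ; α ≤ d_Y`. -/
def Functional (D : RelDoctrine C P) {X Y : C} (α : P X Y) : Prop :=
  D.comp (D.conv α) α ≤ D.d Y

/-- `α` is total: `d_X ≤ α ; α°`. -/
def Total (D : RelDoctrine C P) {X Y : C} (α : P X Y) : Prop :=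
  D.d X ≤ D.comp α (D.conv α)

/-- `α` is injective: `α ; α° ≤ d_X`. -/
def InjectiveRel (D : RelDoctrine C P) {X Y : C} (α : P X Y) : Prop :=
  D.comp α (D.conv α) ≤ D.d X

/-- `α` is surjective: `d_Y ≤ α° ; α`. -/
def SurjectiveRel (D : RelDoctrine C P) {X Y : C} (α : P X Y) : Prop :=
  D.d Y ≤ D.comp (D.conv α) α

/-- The kernel of an arrow `f` is `gr(f) ; gr(f)°`. -/
def kernelOf (D : RelDoctrine C P) {X Y : C} (f : X ⟶ Y) : P X X :=
  D.comp (D.gr f) (D.conv (D.gr f))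

/-- An `R`-equivalence relation: reflexive, symmetric, transitive. -/
def IsEquivRel (D : RelDoctrine C P) {X : C} (ρ : P X X) : Prop :=
  D.d X ≤ ρ ∧ D.conv ρ ≤ ρ ∧ D.comp ρ ρ ≤ ρ

/-- `q : X ⟶ W` is a quotient arrow of the equivalence relation `ρ` on `X`. -/
def IsQuotientArrow (D : RelDoctrine C P) {X W : C} (ρ : P X X) (q : X ⟶ W) : Prop :=
  ρ ≤ D.kernelOf q ∧
    ∀ (Z : C) (f : X ⟶ Z), ρ ≤ D.kernelOf f → ∃! h : W ⟶ Z, f = q ≫ h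

/-- The quotient arrow `q` of `ρ` is effective: `ρ = gr(q) ; gr(q)°`. -/
def Effective (D : RelDoctrine C P) {X W : C} (ρ : P X X) (q : X ⟶ W) : Prop :=
  ρ = D.kernelOf q

/-- The arrow `q` is descent: `d_W ≤ gr(q)° ; gr(q)`. -/
def Descent (D : RelDoctrine C P) {X W : C} (q : X ⟶ W) : Prop :=
  D.d W ≤ D.comp (D.conv (D.gr q)) (D.gr q)

/-- `D` has quotients: every equivalence relation admits an effective descent quotient arrow. -/
def HasQuotients (D : RelDoctrine C P) : Prop :=
  ∀ (X : C) (ρ : P X X), D.IsEquivRel ρ →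
    ∃ (W : C) (q : X ⟶ W), D.IsQuotientArrow ρ q ∧ D.Effective ρ q ∧ D.Descent q

/-- `f ≐ g` : the arrows `f, g` are `R`-equal, i.e. `d_X ≤ R(f,g)(d_Y)`. -/
def RExtEq (D : RelDoctrine C P) {X Y : C} (f g : X ⟶ Y) : Prop :=
  D.d X ≤ D.reidx f g (D.d Y)

/-- `D` is extensional: `R`-equal arrows are equal. -/
def Extensional (D : RelDoctrine C P) : Prop :=
  ∀ (X Y : C) (f g : X ⟶ Y), D.RExtEq f g → f = g

/-- `D` is balanced: every bijective arrow is an isomorphism. -/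
def BalancedDoc (D : RelDoctrine C P) : Prop :=
  ∀ (X Y : C) (f : X ⟶ Y), D.InjectiveRel (D.gr f) → D.SurjectiveRel (D.gr f) → IsIso f

/-- `Q` is `R`-projective with respect to quotient arrows. -/
def ProjectiveObj (D : RelDoctrine C P) (Q : C) : Prop :=
  ∀ (X Y : C) (f : Q ⟶ Y) (q : X ⟶ Y) (ρ : P X X),
    D.IsEquivRel ρ → D.IsQuotientArrow ρ q → ∃ h : Q ⟶ X, f = h ≫ q

/-- Descent data with respect to equivalence relations `ρ` and `σ` : `ρ° ; α ; σ ≤ α`. -/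
def Des (D : RelDoctrine C P) {X Y : C} (ρ : P X X) (σ : P Y Y) (α : P X Y) : Prop :=
  D.comp (D.comp (D.conv ρ) α) σ ≤ α

/-- The rule of unique choice: every functional total relation contains the graph of an arrow. -/
def RUC (D : RelDoctrine C P) : Prop :=
  ∀ (X Y : C) (α : P X Y), D.Functional α → D.Total α → ∃ f : X ⟶ Y, D.gr f ≤ α

end RelDoctrine

variable {C : Type u} [Category.{v} C] {P : C → C → Type w} [∀ X Y : C, PartialOrder (P X Y)]

open CategoryTheory.Limits

/-- A cartesian structure on a relational doctrine. -/
structure CartStruct (D : RelDoctrine C P) [HasTerminal C] [HasBinaryProducts C] where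
  rprod : ∀ {X Y A B : C}, P X Y → P A B → P (X ⨯ A) (Y ⨯ B)
  rprod_mono : ∀ {X Y A B : C} {α α' : P X Y} {β β' : P A B},
      α ≤ α' → β ≤ β' → rprod α β ≤ rprod α' β'
  rprod_natural : ∀ {X' X Y' Y A' A B' B : C} (f : X' ⟶ X) (g : Y' ⟶ Y)
      (h : A' ⟶ A) (k : B' ⟶ B) (α : P X Y) (β : P A B),
      rprod (D.reidx f g α) (D.reidx h k β) =
        D.reidx (prod.map f h) (prod.map g k) (rprod α β)
  d_rprod : ∀ X Y : C, D.d (X ⨯ Y) = rprod (D.d X) (D.d Y)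
  rprod_comp : ∀ {X Y Z X' Y' Z' : C} (α : P X Y) (β : P Y Z) (α' : P X' Y') (β' : P Y' Z'),
      D.comp (rprod α α') (rprod β β') = rprod (D.comp α β) (D.comp α' β')
  rprod_conv : ∀ {X Y A B : C} (α : P X Y) (β : P A B),
      D.conv (rprod α β) = rprod (D.conv α) (D.conv β)
  le_term : ∀ {X Y : C} (α : P X Y),
      α ≤ D.comp (D.gr (terminal.from X)) (D.conv (D.gr (terminal.from Y)))
  le_fst : ∀ {X Y A B : C} (α : P X Y) (β : P A B),
      rprod α β ≤ D.comp (D.comp (D.gr (prod.fst : X ⨯ A ⟶ X)) α)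
        (D.conv (D.gr (prod.fst : Y ⨯ B ⟶ Y)))
  le_snd : ∀ {X Y A B : C} (α : P X Y) (β : P A B),
      rprod α β ≤ D.comp (D.comp (D.gr (prod.snd : X ⨯ A ⟶ A)) β)
        (D.conv (D.gr (prod.snd : Y ⨯ B ⟶ B)))
  le_diag : ∀ {X Y : C} (α : P X Y),
      α ≤ D.comp (D.comp (D.gr (diag X)) (rprod α α)) (D.conv (D.gr (diag Y)))

namespace CartStruct

variable [HasTerminal C] [HasBinaryProducts C] {D : RelDoctrine C P}

/-- The fibred binary meet `α ∧ β = gr(Δ) ; (α ⊠ β) ; gr(Δ)°`. -/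
noncomputable def meet (CS : CartStruct D) {X Y : C} (α β : P X Y) : P X Y :=
  D.comp (D.comp (D.gr (diag X)) (CS.rprod α β)) (D.conv (D.gr (diag Y)))

/-- Frobenius reciprocity. -/
def Frobenius (CS : CartStruct D) : Prop :=
  ∀ (X Y A : C) (f : X ⟶ Y) (α : P A X) (β : P A Y),
    CS.meet (D.comp α (D.gr f)) β = D.comp (CS.meet α (D.comp β (D.conv (D.gr f)))) (D.gr f)

/-- The modular law. -/
def Modular (CS : CartStruct D) : Prop :=
  ∀ (A X Y : C) (α : P A X) (β : P A Y) (γ : P X Y),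
    CS.meet (D.comp α γ) β ≤ D.comp (CS.meet α (D.comp β (D.conv γ))) γ

end CartStruct

/-!
Since `(α ⊠ β) ; gr(Δ)° = (gr π₁ ; α) ∧ (gr π₂ ; β)`, the claim becomes
`((gr π₁ ; α) ∧ gr π₂) ; gr ! = (gr π₁ ∧ (gr π₂ ; α°)) ; gr !`.
The modular law gives `(gr π₁ ; α) ∧ gr π₂ ≤ (gr π₁ ∧ (gr π₂ ; α°)) ; α`, and the trailing `α`
is absorbed by `gr !`, because every relation into `1` lies below `gr !`.
The same argument for `α°`, with the meet commuted, gives the reverse inequality.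
-/

namespace RelDoctrine

variable (D : RelDoctrine C P)

theorem reidx_conv {A X B Y : C} (f : A ⟶ X) (g : B ⟶ Y) (α : P X Y) :
    D.conv (D.reidx f g α) = D.reidx g f (D.conv α) := by
  refine le_antisymm (D.conv_reidx_le f g α) ?_
  have h := D.conv_mono (D.conv_reidx_le g f (D.conv α))
  rwa [D.conv_conv, D.conv_conv] at h

theorem gr_id (X : C) : D.gr (𝟙 X) = D.d X :=
  D.reidx_id _

theorem gr_comp_le {X Y Z : C} (f : X ⟶ Y) (g : Y ⟶ Z) :
    D.comp (D.gr f) (D.gr g) ≤ D.gr (f ≫ g) := by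
  have hf : D.gr f ≤ D.reidx (f ≫ g) g (D.d Z) := by
    have h := D.reidx_mono f (𝟙 Y) (D.d_le_reidx g)
    rwa [← D.reidx_comp, Category.id_comp] at h
  calc D.comp (D.gr f) (D.gr g)
      ≤ D.comp (D.reidx (f ≫ g) g (D.d Z)) (D.reidx g (𝟙 Z) (D.d Z)) := D.comp_mono hf le_rfl
    _ ≤ D.reidx (f ≫ g) (𝟙 Z) (D.comp (D.d Z) (D.d Z)) := D.comp_reidx_le _ _ _ _ _
    _ = D.gr (f ≫ g) := by rw [D.d_comp]; rfl

theorem gr_comp_gr_le_d_of_comp_eq_id {X Y : C} {s : X ⟶ Y} {r : Y ⟶ X} (h : s ≫ r = 𝟙 X) :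
    D.comp (D.gr s) (D.gr r) ≤ D.d X := by
  simpa only [h, gr_id] using D.gr_comp_le s r

theorem conv_gr_le_gr_of_comp_eq_id {X Y : C} {s : X ⟶ Y} {r : Y ⟶ X} (h : s ≫ r = 𝟙 X) :
    D.conv (D.gr s) ≤ D.gr r := by
  have hr := D.reidx_mono (𝟙 Y) s (D.d_le_reidx r)
  rw [← D.reidx_comp, h, Category.id_comp] at hr
  rwa [gr, reidx_conv, D.conv_d]

theorem gr_comp_comp_conv_gr_le {X X' Y Y' : C} {s : X ⟶ X'} {p : X' ⟶ X} {t : Y ⟶ Y'}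
    {q : Y' ⟶ Y} (hs : s ≫ p = 𝟙 X) (ht : t ≫ q = 𝟙 Y) (α : P X Y) :
    D.comp (D.comp (D.gr s) (D.comp (D.comp (D.gr p) α) (D.conv (D.gr q)))) (D.conv (D.gr t))
      ≤ α := by
  have hq : D.comp (D.conv (D.gr q)) (D.conv (D.gr t)) ≤ D.d Y := by
    rw [← D.conv_comp, ← D.conv_d]
    exact D.conv_mono (D.gr_comp_gr_le_d_of_comp_eq_id ht)
  calc _ = D.comp (D.comp (D.comp (D.gr s) (D.gr p)) α)
          (D.comp (D.conv (D.gr q)) (D.conv (D.gr t))) := by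
        simp only [D.comp_assoc]
    _ ≤ D.comp (D.comp (D.d X) α) (D.d Y) :=
        D.comp_mono (D.comp_mono (D.gr_comp_gr_le_d_of_comp_eq_id hs) le_rfl) hq
    _ = α := by rw [D.d_comp, D.comp_d]

end RelDoctrine

namespace CartStruct

variable [HasTerminal C] [HasBinaryProducts C] {D : RelDoctrine C P}

theorem rprod_gr (CS : CartStruct D) {X Y A B : C} (f : X ⟶ Y) (g : A ⟶ B) :
    CS.rprod (D.gr f) (D.gr g) = D.gr (prod.map f g) := by
  rw [RelDoctrine.gr, RelDoctrine.gr, CS.rprod_natural, ← CS.d_rprod, prod.map_id_id]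
  rfl

theorem meet_le_left (CS : CartStruct D) {X Y : C} (α β : P X Y) : CS.meet α β ≤ α :=
  le_trans (D.comp_mono (D.comp_mono le_rfl (CS.le_fst α β)) le_rfl)
    (D.gr_comp_comp_conv_gr_le (prod.lift_fst _ _) (prod.lift_fst _ _) α)

theorem meet_le_right (CS : CartStruct D) {X Y : C} (α β : P X Y) : CS.meet α β ≤ β :=
  le_trans (D.comp_mono (D.comp_mono le_rfl (CS.le_snd α β)) le_rfl)
    (D.gr_comp_comp_conv_gr_le (prod.lift_snd _ _) (prod.lift_snd _ _) β)

theorem le_meet (CS : CartStruct D) {X Y : C} {α β γ : P X Y} (hα : γ ≤ α) (hβ : γ ≤ β) :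
    γ ≤ CS.meet α β :=
  le_trans (CS.le_diag γ) (D.comp_mono (D.comp_mono le_rfl (CS.rprod_mono hα hβ)) le_rfl)

theorem meet_comm (CS : CartStruct D) {X Y : C} (α β : P X Y) : CS.meet α β = CS.meet β α :=
  le_antisymm (CS.le_meet (CS.meet_le_right α β) (CS.meet_le_left α β))
    (CS.le_meet (CS.meet_le_right β α) (CS.meet_le_left β α))

theorem gr_diag_comp_gr_eq_d (CS : CartStruct D) {W : C} {r : W ⨯ W ⟶ W}
    (h : diag W ≫ r = 𝟙 W) :
    D.comp (D.gr (diag W)) (D.gr r) = D.d W := by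
  refine le_antisymm (D.gr_comp_gr_le_d_of_comp_eq_id h) ?_
  calc D.d W ≤ D.comp (D.gr (diag W)) (D.conv (D.gr (diag W))) := by
        simpa only [← CS.d_rprod, D.comp_d] using CS.le_diag (D.d W)
    _ ≤ D.comp (D.gr (diag W)) (D.gr r) :=
        D.comp_mono le_rfl (D.conv_gr_le_gr_of_comp_eq_id h)

theorem rprod_comp_conv_gr_diag (CS : CartStruct D) {X A Z : C} (α : P X Z) (β : P A Z) :
    D.comp (CS.rprod α β) (D.conv (D.gr (diag Z))) =
      CS.meet (D.comp (D.gr (prod.fst : X ⨯ A ⟶ X)) α)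
        (D.comp (D.gr (prod.snd : X ⨯ A ⟶ A)) β) := by
  have hsplit : diag (X ⨯ A) ≫ prod.map prod.fst prod.snd = 𝟙 (X ⨯ A) := by
    apply prod.hom_ext <;> simp
  rw [meet, ← CS.rprod_comp, rprod_gr, D.comp_assoc, CS.gr_diag_comp_gr_eq_d hsplit, D.d_comp]

theorem comp_gr_terminal_le (CS : CartStruct D) {X Y : C} (α : P X Y) :
    D.comp α (D.gr (terminal.from Y)) ≤ D.gr (terminal.from X) := by
  simpa only [terminal.hom_ext (terminal.from (⊤_ C)) (𝟙 _), D.gr_id, D.conv_d, D.comp_d]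
    using CS.le_term (D.comp α (D.gr (terminal.from Y)))

theorem Modular.comp_gr_terminal_le {CS : CartStruct D} (hM : CS.Modular) {A X Y : C}
    (α : P A X) (β : P A Y) (γ : P X Y) :
    D.comp (CS.meet (D.comp α γ) β) (D.gr (terminal.from Y)) ≤
      D.comp (CS.meet α (D.comp β (D.conv γ))) (D.gr (terminal.from X)) :=
  calc _ ≤ D.comp (D.comp (CS.meet α (D.comp β (D.conv γ))) γ) (D.gr (terminal.from Y)) :=
        D.comp_mono (hM A X Y α β γ) le_rfl
    _ = D.comp (CS.meet α (D.comp β (D.conv γ))) (D.comp γ (D.gr (terminal.from Y))) :=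
        (D.comp_assoc _ _ _).symm
    _ ≤ _ := D.comp_mono le_rfl (CS.comp_gr_terminal_le γ)

end CartStruct

open CategoryTheory.Limits in
/-- In a cartesian and modular relational doctrine:
`(α ⊠ d_Y) ; gr Δ_Y ° ; gr !_Y = (d_X ⊠ α°) ; gr Δ_X ° ; gr !_X`. -/
theorem statement17 [HasTerminal C] [HasBinaryProducts C]
    (D : RelDoctrine C P) (CS : CartStruct D) (hM : CS.Modular)
    (X Y : C) (α : P X Y) :
    D.comp (D.comp (CS.rprod α (D.d Y)) (D.conv (D.gr (diag Y))))
        (D.gr (terminal.from Y)) =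
      D.comp (D.comp (CS.rprod (D.d X) (D.conv α)) (D.conv (D.gr (diag X))))
        (D.gr (terminal.from X)) := by
  rw [CS.rprod_comp_conv_gr_diag, CS.rprod_comp_conv_gr_diag, D.comp_d, D.comp_d]
  refine le_antisymm (hM.comp_gr_terminal_le _ _ α) ?_
  have h := hM.comp_gr_terminal_le (D.gr (prod.snd : X ⨯ Y ⟶ Y)) (D.gr prod.fst) (D.conv α)
  rwa [D.conv_conv, CS.meet_comm, CS.meet_comm (D.gr prod.snd)] at h
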